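/- If ∇¹, ∇², ∇³ are flat linear connections (R_{∇^{(i)}} = 0) on a Lie–Rinehart algebra, then the curvature of the ternary product ∇ := ∇¹ − ∇² + ∇³ is given by R_∇(u,v)w = 2∇²_{[u,v]}w + Σ_{i≠j} (−1)^{i+j} [∇^{(i)}_u, ∇^{(j)}_v]w; in particular the set of flat connections need not be closed under the ternary heap operation. -/

import Mathlib

/-- A linear connection on an anchored module `(L, ρ)` over an `R`-algebra `A`. -/
def IsConn {R A L : Type*} [CommRing R] [CommRing A] [Algebra R A]
    [AddCommGroup L] [Module R L] [Module A L]
    (ρ : L →ₗ[A] Derivation R A A) (D : L → L → L) : Prop :=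
  (∀ u v w : L, D (u + v) w = D u w + D v w) ∧
  (∀ u v w : L, D u (v + w) = D u v + D u w) ∧
  (∀ (r : R) (u v : L), D (r • u) v = r • D u v) ∧
  (∀ (r : R) (u v : L), D u (r • v) = r • D u v) ∧
  (∀ (f : A) (u v : L), D (f • u) v = f • D u v) ∧
  (∀ (f : A) (u v : L), D u (f • v) = ρ u f • v + f • D u v)

/-- `(L, ρ, ⁅-,-⁆)` is a Lie–Rinehart algebra: the anchor is a homomorphism of
Lie algebras and the Leibniz rule `⁅u, f • v⁆ = ρ u f • v + f • ⁅u,v⁆` holds. -/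
def IsLieRinehart {R A L : Type*} [CommRing R] [CommRing A] [Algebra R A]
    [LieRing L] [LieAlgebra R L] [Module A L]
    (ρ : L →ₗ[A] Derivation R A A) : Prop :=
  (∀ u v : L, ρ ⁅u, v⁆ = ⁅ρ u, ρ v⁆) ∧
  (∀ (u : L) (f : A) (v : L), ⁅u, f • v⁆ = ρ u f • v + f • ⁅u, v⁆)

/-- The torsion of a connection `D` on a Lie–Rinehart algebra. -/
def Tor {L : Type*} [LieRing L] (D : L → L → L) : L → L → L :=
  fun u v => D u v - D v u - ⁅u, v⁆

/-- The curvature of a connection `D` on a Lie–Rinehart algebra. -/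
def Curv {L : Type*} [LieRing L] (D : L → L → L) : L → L → L → L :=
  fun u v w => D u (D v w) - D v (D u w) - D ⁅u, v⁆ w

/-- The commutator `[P,Q] := P∘Q - Q∘P` of two maps `L → L`. -/
def commMap {L : Type*} [AddCommGroup L] (P Q : L → L) : L → L :=
  fun w => P (Q w) - Q (P w)

theorem map_sub_add_of_map_add {M : Type*} [AddCommGroup M] {P : M → M}
    (hP : ∀ v w, P (v + w) = P v + P w) (x y z : M) :
    P (x - y + z) = P x - P y + P z := by
  change AddMonoidHom.mk' P hP (x - y + z) = _
  rw [map_add, map_sub]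
  rfl

/-- Expanding `∇_u ∇_v w` biadditively, the diagonal terms give `R_{∇ⁱ}(u,v)w + ∇ⁱ_{[u,v]}w`
and the off-diagonal ones the commutators; against `-∇_{[u,v]}w` the bracket terms
leave `2∇²_{[u,v]}w`. -/
theorem curv_sub_add {L : Type*} [LieRing L] (D₁ D₂ D₃ : L → L → L)
    (h₁ : ∀ u v w : L, D₁ u (v + w) = D₁ u v + D₁ u w)
    (h₂ : ∀ u v w : L, D₂ u (v + w) = D₂ u v + D₂ u w)
    (h₃ : ∀ u v w : L, D₃ u (v + w) = D₃ u v + D₃ u w) (u v w : L) :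
    Curv (D₁ - D₂ + D₃) u v w
      = Curv D₁ u v w + Curv D₂ u v w + Curv D₃ u v w + (2 : ℤ) • D₂ ⁅u, v⁆ w
        + (- commMap (D₁ u) (D₂ v) w + commMap (D₁ u) (D₃ v) w
           - commMap (D₂ u) (D₁ v) w - commMap (D₂ u) (D₃ v) w
           + commMap (D₃ u) (D₁ v) w - commMap (D₃ u) (D₂ v) w) := by
  simp only [Curv, commMap, Pi.add_apply, Pi.sub_apply]
  rw [map_sub_add_of_map_add (h₁ u), map_sub_add_of_map_add (h₂ u),
    map_sub_add_of_map_add (h₃ u), map_sub_add_of_map_add (h₁ v),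
    map_sub_add_of_map_add (h₂ v), map_sub_add_of_map_add (h₃ v)]
  abel

theorem curvature_tern_flat_general {R A L : Type*} [CommRing R] [CommRing A] [Algebra R A]
    [LieRing L] [LieAlgebra R L] [Module A L]
    (ρ : L →ₗ[A] Derivation R A A)
    (D₁ D₂ D₃ : L → L → L)
    (h₁ : IsConn ρ D₁) (h₂ : IsConn ρ D₂) (h₃ : IsConn ρ D₃)
    (f₁ : Curv D₁ = 0) (f₂ : Curv D₂ = 0) (f₃ : Curv D₃ = 0) :
    ∀ u v w : L,
      Curv (D₁ - D₂ + D₃) u v w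
        = (2 : ℤ) • D₂ ⁅u, v⁆ w
          + (- commMap (D₁ u) (D₂ v) w + commMap (D₁ u) (D₃ v) w
             - commMap (D₂ u) (D₁ v) w - commMap (D₂ u) (D₃ v) w
             + commMap (D₃ u) (D₁ v) w - commMap (D₃ u) (D₂ v) w) := by
  intro u v w
  rw [curv_sub_add D₁ D₂ D₃ h₁.2.1 h₂.2.1 h₃.2.1, f₁, f₂, f₃]
  simp only [Pi.zero_apply, add_zero, zero_add]

/-- If `∇¹, ∇², ∇³` are flat, the curvature of `∇¹ - ∇² + ∇³` is
`2∇²_{[u,v]} + Σ_{i≠j} (-1)^{i+j} [∇⁽ⁱ⁾_u, ∇⁽ʲ⁾_v]`; in particular flat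
connections need not be closed under the ternary operation. -/
theorem curvature_tern_flat {R A L : Type*} [CommRing R] [CommRing A] [Algebra R A]
    [LieRing L] [LieAlgebra R L] [Module A L]
    (ρ : L →ₗ[A] Derivation R A A) (hLR : IsLieRinehart ρ)
    (D₁ D₂ D₃ : L → L → L)
    (h₁ : IsConn ρ D₁) (h₂ : IsConn ρ D₂) (h₃ : IsConn ρ D₃)
    (f₁ : Curv D₁ = 0) (f₂ : Curv D₂ = 0) (f₃ : Curv D₃ = 0) :
    ∀ u v w : L,
      Curv (D₁ - D₂ + D₃) u v w
        = (2 : ℤ) • D₂ ⁅u, v⁆ w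
          + (- commMap (D₁ u) (D₂ v) w + commMap (D₁ u) (D₃ v) w
             - commMap (D₂ u) (D₁ v) w - commMap (D₂ u) (D₃ v) w
             + commMap (D₃ u) (D₁ v) w - commMap (D₃ u) (D₂ v) w) :=
  curvature_tern_flat_general ρ D₁ D₂ D₃ h₁ h₂ h₃ f₁ f₂ f₃
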